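/- arXiv:2509.23070 — 2 statements merged into one kernel-verified Lean document; each statement's English description precedes it below -/
import Mathlib

section
/- Let g = g₋₁ ⊕ g₀ ⊕ g₁ be a Lie algebra with a short grading, and let α = span(e, h, f) be a short sl₂-subalgebra (so that ad h has eigenvalues −1, 0, 1 realizing the grading, with f ∈ g₁). Define on g₋₁ the product x ∘ y := [[f, x], y]. Then (g₋₁, ∘) is a commutative algebra satisfying the Jordan identity ((x∘x)∘y)∘x = (x∘x)∘(y∘x). -/
theorem tkk_aux
    {k : Type*} [Field k] [CharZero k]
    {g : Type*} [LieRing g] [LieAlgebra k g]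
    (Vm V₀ Vp : Submodule k g)
    (hmm : ∀ x ∈ Vm, ∀ y ∈ Vm, ⁅x, y⁆ = 0)
    (hpp : ∀ x ∈ Vp, ∀ y ∈ Vp, ⁅x, y⁆ = 0)
    (h0m : ∀ x ∈ V₀, ∀ y ∈ Vm, ⁅x, y⁆ ∈ Vm)
    (h0p : ∀ x ∈ V₀, ∀ y ∈ Vp, ⁅x, y⁆ ∈ Vp)
    (hmp : ∀ x ∈ Vm, ∀ y ∈ Vp, ⁅x, y⁆ ∈ V₀)
    (f : g) (hf : f ∈ Vp) :
    (∀ x ∈ Vm, ∀ y ∈ Vm, ⁅⁅f, x⁆, y⁆ ∈ Vm) ∧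
    (∀ x ∈ Vm, ∀ y ∈ Vm, ⁅⁅f, x⁆, y⁆ = ⁅⁅f, y⁆, x⁆) ∧
    (∀ x ∈ Vm, ∀ y ∈ Vm,
      ⁅⁅f, ⁅⁅f, ⁅⁅f, x⁆, x⁆⁆, y⁆⁆, x⁆ = ⁅⁅f, ⁅⁅f, x⁆, x⁆⁆, ⁅⁅f, y⁆, x⁆⁆) := by
  have h3k : (3 : k) ≠ 0 := by norm_num
  have kill3 : ∀ v : g, (3 : k) • v = 0 → v = 0 := by
    intro v hv
    have hv2 : v = (3 : k)⁻¹ • ((3 : k) • v) := by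
      rw [smul_smul, inv_mul_cancel₀ h3k, one_smul]
    rw [hv2, hv, smul_zero]
  have hF0 : ∀ a ∈ Vm, ⁅f, a⁆ ∈ V₀ := by
    intro a ha
    rw [← lie_skew]
    exact V₀.neg_mem (hmp a ha f hf)
  have hclo : ∀ a ∈ Vm, ∀ b ∈ Vm, ⁅⁅f, a⁆, b⁆ ∈ Vm := fun a ha b hb =>
    h0m _ (hF0 a ha) b hb
  have hcomm : ∀ a ∈ Vm, ∀ b ∈ Vm, ⁅⁅f, a⁆, b⁆ = ⁅⁅f, b⁆, a⁆ := by
    intro a ha b hb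
    have h1 := lie_lie f a b
    rw [hmm a ha b hb, lie_zero, zero_sub, lie_skew] at h1
    exact h1
  have hPp : ∀ a ∈ Vm, ⁅f, ⁅f, a⁆⁆ ∈ Vp := by
    intro a ha
    rw [← lie_skew]
    exact Vp.neg_mem (h0p _ (hF0 a ha) f hf)
  have hPf : ∀ a ∈ Vm, ⁅f, ⁅f, ⁅f, a⁆⁆⁆ = 0 := fun a ha => hpp f hf _ (hPp a ha)
  have lemPy : ∀ a y : g, ⁅⁅f, ⁅f, a⁆⁆, y⁆ = ⁅f, ⁅⁅f, a⁆, y⁆⁆ - ⁅⁅f, a⁆, ⁅f, y⁆⁆ :=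
    fun a y => lie_lie f ⁅f, a⁆ y
  -- R3
  have hR3 : ∀ a ∈ Vm, ∀ y : g,
      ⁅f, ⁅f, ⁅⁅f, a⁆, y⁆⁆⁆ =
        ⁅⁅f, ⁅f, a⁆⁆, ⁅f, y⁆⁆ + ⁅⁅f, ⁅f, a⁆⁆, ⁅f, y⁆⁆ + ⁅⁅f, a⁆, ⁅f, ⁅f, y⁆⁆⁆ := by
    intro a ha y
    have w1 : ⁅f, ⁅⁅f, ⁅f, a⁆⁆, y⁆⁆ = ⁅⁅f, ⁅f, ⁅f, a⁆⁆⁆, y⁆ + ⁅⁅f, ⁅f, a⁆⁆, ⁅f, y⁆⁆ :=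
      leibniz_lie f ⁅f, ⁅f, a⁆⁆ y
    rw [hPf a ha, zero_lie, zero_add] at w1
    have w2 : ⁅f, ⁅⁅f, ⁅f, a⁆⁆, y⁆⁆ =
        ⁅f, ⁅f, ⁅⁅f, a⁆, y⁆⁆⁆ - (⁅⁅f, ⁅f, a⁆⁆, ⁅f, y⁆⁆ + ⁅⁅f, a⁆, ⁅f, ⁅f, y⁆⁆⁆) := by
      rw [lemPy a y, lie_sub, leibniz_lie f ⁅f, a⁆ ⁅f, y⁆]
    have h2 := w1.symm.trans w2
    rw [eq_sub_iff_add_eq] at h2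
    rw [← h2]; abel
  -- skew symmetry of ⁅P a, F y⁆
  have hskw : ∀ a ∈ Vm, ∀ y ∈ Vm,
      ⁅⁅f, ⁅f, a⁆⁆, ⁅f, y⁆⁆ = ⁅⁅f, ⁅f, y⁆⁆, ⁅f, a⁆⁆ := by
    intro a ha y hy
    have t1 := hR3 a ha y
    have t2 := hR3 y hy a
    rw [hcomm a ha y hy] at t1
    have comb := t1.symm.trans t2
    rw [show ⁅⁅f, a⁆, ⁅f, ⁅f, y⁆⁆⁆ = -⁅⁅f, ⁅f, y⁆⁆, ⁅f, a⁆⁆ from (lie_skew _ _).symm,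
        show ⁅⁅f, y⁆, ⁅f, ⁅f, a⁆⁆⁆ = -⁅⁅f, ⁅f, a⁆⁆, ⁅f, y⁆⁆ from (lie_skew _ _).symm] at comb
    have h8 : (3 : k) • (⁅⁅f, ⁅f, a⁆⁆, ⁅f, y⁆⁆ - ⁅⁅f, ⁅f, y⁆⁆, ⁅f, a⁆⁆) = 0 := by
      rw [show (3 : k) • (⁅⁅f, ⁅f, a⁆⁆, ⁅f, y⁆⁆ - ⁅⁅f, ⁅f, y⁆⁆, ⁅f, a⁆⁆) =
          (⁅⁅f, ⁅f, a⁆⁆, ⁅f, y⁆⁆ + ⁅⁅f, ⁅f, a⁆⁆, ⁅f, y⁆⁆ + -⁅⁅f, ⁅f, y⁆⁆, ⁅f, a⁆⁆) -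
          (⁅⁅f, ⁅f, y⁆⁆, ⁅f, a⁆⁆ + ⁅⁅f, ⁅f, y⁆⁆, ⁅f, a⁆⁆ + -⁅⁅f, ⁅f, a⁆⁆, ⁅f, y⁆⁆) from by
        module, comb, sub_self]
    exact sub_eq_zero.mp (kill3 _ h8)
  -- R4
  have hR4 : ∀ a ∈ Vm, ∀ y ∈ Vm,
      ⁅f, ⁅f, ⁅⁅f, a⁆, y⁆⁆⁆ = ⁅⁅f, ⁅f, a⁆⁆, ⁅f, y⁆⁆ := by
    intro a ha y hy
    have t1 := hR3 a ha y
    rw [show ⁅⁅f, a⁆, ⁅f, ⁅f, y⁆⁆⁆ = -⁅⁅f, ⁅f, y⁆⁆, ⁅f, a⁆⁆ from (lie_skew _ _).symm,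
        ← hskw a ha y hy] at t1
    rw [t1]; abel
  -- ⁅D a y, f⁆ = 0
  have hDf0 : ∀ a ∈ Vm, ∀ y ∈ Vm, ⁅⁅⁅f, a⁆, ⁅f, y⁆⁆, f⁆ = 0 := by
    intro a ha y hy
    have e1 := lie_lie ⁅f, a⁆ ⁅f, y⁆ f
    rw [show ⁅⁅f, y⁆, f⁆ = -⁅f, ⁅f, y⁆⁆ from (lie_skew _ _).symm,
        show ⁅⁅f, a⁆, f⁆ = -⁅f, ⁅f, a⁆⁆ from (lie_skew _ _).symm,
        lie_neg, lie_neg,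
        show ⁅⁅f, a⁆, ⁅f, ⁅f, y⁆⁆⁆ = -⁅⁅f, ⁅f, y⁆⁆, ⁅f, a⁆⁆ from (lie_skew _ _).symm,
        show ⁅⁅f, y⁆, ⁅f, ⁅f, a⁆⁆⁆ = -⁅⁅f, ⁅f, a⁆⁆, ⁅f, y⁆⁆ from (lie_skew _ _).symm,
        hskw a ha y hy] at e1
    rw [e1]; abel
  -- ⁅D a y, ⁅f, b⁆⁆ = ⁅f, ⁅D a y, b⁆⁆
  have hDF : ∀ a ∈ Vm, ∀ y ∈ Vm, ∀ b : g,
      ⁅⁅⁅f, a⁆, ⁅f, y⁆⁆, ⁅f, b⁆⁆ = ⁅f, ⁅⁅⁅f, a⁆, ⁅f, y⁆⁆, b⁆⁆ := by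
    intro a ha y hy b
    have e1 := lie_lie (⁅⁅f, a⁆, ⁅f, y⁆⁆) f b
    rw [hDf0 a ha y hy, zero_lie] at e1
    exact sub_eq_zero.mp e1.symm
  -- R5 : D (a∘b) y = D a (b∘y) + D b (a∘y)
  have hR5 : ∀ a ∈ Vm, ∀ b ∈ Vm, ∀ y ∈ Vm,
      ⁅⁅f, ⁅⁅f, a⁆, b⁆⁆, ⁅f, y⁆⁆ =
        ⁅⁅f, a⁆, ⁅f, ⁅⁅f, b⁆, y⁆⁆⁆ + ⁅⁅f, b⁆, ⁅f, ⁅⁅f, a⁆, y⁆⁆⁆ := by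
    intro a ha b hb y hy
    have E1 : ⁅⁅f, ⁅f, ⁅⁅f, a⁆, b⁆⁆⁆, y⁆ =
        ⁅f, ⁅⁅f, y⁆, ⁅⁅f, a⁆, b⁆⁆⁆ - ⁅⁅f, ⁅⁅f, a⁆, b⁆⁆, ⁅f, y⁆⁆ := by
      rw [lemPy ⁅⁅f, a⁆, b⁆ y, hcomm _ (hclo a ha b hb) y hy]
    have E2 : ⁅⁅f, ⁅f, ⁅⁅f, a⁆, b⁆⁆⁆, y⁆ =
        ⁅f, ⁅⁅f, y⁆, ⁅⁅f, a⁆, b⁆⁆⁆ -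
          (⁅⁅f, a⁆, ⁅f, ⁅⁅f, b⁆, y⁆⁆⁆ + ⁅⁅f, b⁆, ⁅f, ⁅⁅f, a⁆, y⁆⁆⁆) := by
      rw [hR4 a ha b hb, lie_lie ⁅f, ⁅f, a⁆⁆ ⁅f, b⁆ y,
          lemPy a ⁅⁅f, b⁆, y⁆, lemPy a y, lie_sub ⁅f, b⁆,
          show ⁅⁅f, b⁆, ⁅⁅f, a⁆, ⁅f, y⁆⁆⁆ = -⁅⁅⁅f, a⁆, ⁅f, y⁆⁆, ⁅f, b⁆⁆ from
            (lie_skew _ _).symm,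
          hDF a ha y hy b, lie_lie ⁅f, a⁆ ⁅f, y⁆ b, hcomm y hy b hb, lie_sub f]
      abel
    have E3 := E1.symm.trans E2
    exact sub_right_inj.mp E3
  -- D (x∘x) x = 0
  have hD0 : ∀ x ∈ Vm, ⁅⁅f, ⁅⁅f, x⁆, x⁆⁆, ⁅f, x⁆⁆ = 0 := by
    intro x hx
    have t := hR5 x hx x hx x hx
    rw [show ⁅⁅f, x⁆, ⁅f, ⁅⁅f, x⁆, x⁆⁆⁆ = -⁅⁅f, ⁅⁅f, x⁆, x⁆⁆, ⁅f, x⁆⁆ from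
      (lie_skew _ _).symm] at t
    apply kill3
    rw [show (3 : k) • ⁅⁅f, ⁅⁅f, x⁆, x⁆⁆, ⁅f, x⁆⁆ =
        ⁅⁅f, ⁅⁅f, x⁆, x⁆⁆, ⁅f, x⁆⁆ -
          (-⁅⁅f, ⁅⁅f, x⁆, x⁆⁆, ⁅f, x⁆⁆ + -⁅⁅f, ⁅⁅f, x⁆, x⁆⁆, ⁅f, x⁆⁆) from by module,
      ← t, sub_self]
  refine ⟨hclo, hcomm, ?_⟩
  intro x hx y hy
  have hsy : ⁅⁅f, ⁅⁅f, x⁆, x⁆⁆, y⁆ ∈ Vm := hclo _ (hclo x hx x hx) y hy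
  rw [hcomm _ hsy x hx, hcomm y hy x hx]
  have q := lie_lie ⁅f, ⁅⁅f, x⁆, x⁆⁆ ⁅f, x⁆ y
  rw [hD0 x hx, zero_lie] at q
  exact (sub_eq_zero.mp q.symm).symm

/-- Let `g = g₋₁ ⊕ g₀ ⊕ g₁` be a Lie algebra with a short grading and let
`(e, h, f)` span a short `sl₂`-subalgebra realizing the grading via the eigenvalues
`−1, 0, 1` of `ad h`, with `e ∈ g₋₁` and `f ∈ g₁`.  Define on `g₋₁` the product
`x ∘ y := [[f, x], y]`.  Then `(g₋₁, ∘)` is a commutative algebra (closed under `∘`)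
satisfying the Jordan identity `((x∘x)∘y)∘x = (x∘x)∘(y∘x)`. -/
theorem tkk_minus_one_part_is_jordan
    (k : Type*) [Field k] [CharZero k]
    (g : Type*) [LieRing g] [LieAlgebra k g]
    (Vm V₀ Vp : Submodule k g)
    -- the grading: g = g₋₁ ⊕ g₀ ⊕ g₁
    (hsup : Vm ⊔ V₀ ⊔ Vp = ⊤)
    (hindep : iSupIndep (fun i : Fin 3 => ![Vm, V₀, Vp] i))
    -- bracket relations of the short grading
    (hmm : ∀ x ∈ Vm, ∀ y ∈ Vm, ⁅x, y⁆ = 0)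
    (hpp : ∀ x ∈ Vp, ∀ y ∈ Vp, ⁅x, y⁆ = 0)
    (h0m : ∀ x ∈ V₀, ∀ y ∈ Vm, ⁅x, y⁆ ∈ Vm)
    (h00 : ∀ x ∈ V₀, ∀ y ∈ V₀, ⁅x, y⁆ ∈ V₀)
    (h0p : ∀ x ∈ V₀, ∀ y ∈ Vp, ⁅x, y⁆ ∈ Vp)
    (hmp : ∀ x ∈ Vm, ∀ y ∈ Vp, ⁅x, y⁆ ∈ V₀)
    -- the short sl₂-subalgebra (e, h, f), with ad h realizing the grading
    (e h f : g) (he : e ∈ Vm) (hh0 : h ∈ V₀) (hf : f ∈ Vp)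
    (hef : ⁅e, f⁆ = h)
    (hgradm : ∀ x ∈ Vm, ⁅h, x⁆ = -x)
    (hgrad0 : ∀ x ∈ V₀, ⁅h, x⁆ = 0)
    (hgradp : ∀ x ∈ Vp, ⁅h, x⁆ = x) :
    (∀ x ∈ Vm, ∀ y ∈ Vm, ⁅⁅f, x⁆, y⁆ ∈ Vm) ∧
    (∀ x ∈ Vm, ∀ y ∈ Vm, ⁅⁅f, x⁆, y⁆ = ⁅⁅f, y⁆, x⁆) ∧
    (∀ x ∈ Vm, ∀ y ∈ Vm,
      ⁅⁅f, ⁅⁅f, ⁅⁅f, x⁆, x⁆⁆, y⁆⁆, x⁆ = ⁅⁅f, ⁅⁅f, x⁆, x⁆⁆, ⁅⁅f, y⁆, x⁆⁆) :=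
  tkk_aux Vm V₀ Vp hmm hpp h0m h0p hmp f hf
end

section
/- Let (h, α) be a short pair (a Lie algebra h with short grading h₋₁ ⊕ h₀ ⊕ h₁ induced by the short sl₂-subalgebra α spanned by e, h, f) such that [h₋₁, h₁] = h₀. Then the kernel of the canonical epimorphism θ : h → Lie(Jor(h)) is contained in the center of h. In particular, if additionally Z(h) = 0, then θ is an isomorphism. -/
/-- Let `(h, α)` be a short pair, i.e. a Lie algebra `g` with short
grading `g₋₁ ⊕ g₀ ⊕ g₁` induced by the short `sl₂`-subalgebra spanned by `(e, h, f)`,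
such that `[g₋₁, g₁] = g₀`.  The kernel of the canonical epimorphism
`θ : g → Lie(Jor(g))` consists exactly of the elements `x ∈ g₀ ⊕ g₁` with
`[x, g₋₁] = 0`; the claim is that every such element is central.  In particular, if
the center of `g` is trivial, every such element is zero (so `θ` is an isomorphism). -/
theorem kernel_of_tkk_epimorphism_is_central
    (k : Type*) [Field k] [CharZero k]
    (g : Type*) [LieRing g] [LieAlgebra k g]
    (Vm V₀ Vp : Submodule k g)
    (hsup : Vm ⊔ V₀ ⊔ Vp = ⊤)
    (hindep : iSupIndep (fun i : Fin 3 => ![Vm, V₀, Vp] i))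
    (hmm : ∀ x ∈ Vm, ∀ y ∈ Vm, ⁅x, y⁆ = 0)
    (hpp : ∀ x ∈ Vp, ∀ y ∈ Vp, ⁅x, y⁆ = 0)
    (h0m : ∀ x ∈ V₀, ∀ y ∈ Vm, ⁅x, y⁆ ∈ Vm)
    (h00 : ∀ x ∈ V₀, ∀ y ∈ V₀, ⁅x, y⁆ ∈ V₀)
    (h0p : ∀ x ∈ V₀, ∀ y ∈ Vp, ⁅x, y⁆ ∈ Vp)
    (hmp : ∀ x ∈ Vm, ∀ y ∈ Vp, ⁅x, y⁆ ∈ V₀)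
    (e h f : g) (he : e ∈ Vm) (hh0 : h ∈ V₀) (hf : f ∈ Vp)
    (hef : ⁅e, f⁆ = h)
    (hgradm : ∀ x ∈ Vm, ⁅h, x⁆ = -x)
    (hgrad0 : ∀ x ∈ V₀, ⁅h, x⁆ = 0)
    (hgradp : ∀ x ∈ Vp, ⁅h, x⁆ = x)
    -- the hypothesis [g₋₁, g₁] = g₀
    (hgen : V₀ ≤ Submodule.span k {w : g | ∃ x ∈ Vm, ∃ y ∈ Vp, w = ⁅x, y⁆}) :
    ∀ x ∈ V₀ ⊔ Vp, (∀ y ∈ Vm, ⁅x, y⁆ = 0) →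
      x ∈ LieAlgebra.center k g ∧ (LieAlgebra.center k g = ⊥ → x = 0) := by

  -- Lemma A: an element of `V₀` commuting with `Vm` commutes with `f`.
  have lemA : ∀ a ∈ V₀, (∀ u ∈ Vm, ⁅a, u⁆ = 0) → ⁅a, f⁆ = 0 := by
    intro a ha hak
    have hy : ⁅a, f⁆ ∈ Vp := h0p a ha f hf
    have hfy : ⁅f, ⁅a, f⁆⁆ = 0 := hpp f hf _ hy
    have hey : ⁅e, ⁅a, f⁆⁆ = 0 := by
      have j : ⁅e, ⁅a, f⁆⁆ = ⁅⁅e, a⁆, f⁆ + ⁅a, ⁅e, f⁆⁆ := leibniz_lie e a f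
      have h1 : ⁅e, a⁆ = 0 := by
        have := hak e he
        rw [← lie_skew] at this
        simpa using (neg_eq_zero.mp (by rw [lie_skew]; simpa using hak e he))
      have h2 : ⁅a, h⁆ = 0 := by
        have := hgrad0 a ha
        rw [← lie_skew, this, neg_zero]
      rw [j, h1, hef, h2, zero_lie, zero_add]
    have : ⁅a, f⁆ = ⁅h, ⁅a, f⁆⁆ := (hgradp _ hy).symm
    rw [this, ← hef, lie_lie, hfy, hey, lie_zero, lie_zero, sub_zero]
  -- Lemma B: an element `z ∈ Vp` such that `⁅z, e⁆` lies in `V₀` and kills `Vm`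
  -- must vanish.
  have lemB : ∀ z ∈ Vp, ⁅z, e⁆ ∈ V₀ → (∀ v ∈ Vm, ⁅⁅z, e⁆, v⁆ = 0) → z = 0 := by
    intro z hz hze hzek
    have hfz : ⁅f, z⁆ = 0 := hpp f hf z hz
    have hA : ⁅⁅z, e⁆, f⁆ = 0 := lemA _ hze hzek
    have hez : ⁅e, z⁆ = -⁅z, e⁆ := by rw [← lie_skew]
    have : z = ⁅h, z⁆ := (hgradp z hz).symm
    rw [this, ← hef, lie_lie, hfz, lie_zero, hez, lie_neg, ← lie_skew f, hA,
      neg_zero, neg_zero, sub_zero]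
  intro x hx hxkill
  -- decompose x = a + b with a ∈ V₀, b ∈ Vp
  obtain ⟨a, ha, b, hb, rfl⟩ := Submodule.mem_sup.mp hx
  have hdisj : Disjoint Vm V₀ := by
    have := hindep.pairwiseDisjoint (show (0 : Fin 3) ≠ 1 by decide)
    simpa [Function.onFun] using this
  -- each graded piece of x kills Vm separately
  have hkey : ∀ u ∈ Vm, ⁅a, u⁆ = 0 ∧ ⁅b, u⁆ = 0 := by
    intro u hu
    have hsum : ⁅a, u⁆ + ⁅b, u⁆ = 0 := by
      rw [← add_lie]; exact hxkill u hu
    have h1 : ⁅a, u⁆ ∈ Vm := h0m a ha u hu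
    have h2 : ⁅b, u⁆ ∈ V₀ := by
      have : ⁅u, b⁆ ∈ V₀ := hmp u hu b hb
      rw [← lie_skew]; exact V₀.neg_mem this
    have h3 : ⁅a, u⁆ ∈ V₀ := by
      have : ⁅a, u⁆ = -⁅b, u⁆ := eq_neg_of_add_eq_zero_left hsum
      rw [this]; exact V₀.neg_mem h2
    have h4 : ⁅a, u⁆ = 0 := Submodule.disjoint_def.mp hdisj _ h1 h3
    refine ⟨h4, ?_⟩
    rw [h4, zero_add] at hsum; exact hsum
  -- b = 0
  have hbz : b = 0 := by
    apply lemB b hb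
    · rw [(hkey e he).2]; exact V₀.zero_mem
    · intro v hv; rw [(hkey e he).2, zero_lie]
  subst hbz
  rw [add_zero] at hx hxkill ⊢
  have hak : ∀ u ∈ Vm, ⁅a, u⁆ = 0 := fun u hu => (hkey u hu).1
  -- a kills Vp
  have hap : ∀ w ∈ Vp, ⁅a, w⁆ = 0 := by
    intro w hw
    have hz : ⁅a, w⁆ ∈ Vp := h0p a ha w hw
    have hwe : ⁅w, e⁆ ∈ V₀ := by
      have : ⁅e, w⁆ ∈ V₀ := hmp e he w hw
      rw [← lie_skew]; exact V₀.neg_mem this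
    have hze : ⁅⁅a, w⁆, e⁆ = ⁅a, ⁅w, e⁆⁆ := by
      rw [lie_lie, hak e he, lie_zero, sub_zero]
    apply lemB _ hz
    · rw [hze]; exact h00 a ha _ hwe
    · intro v hv
      rw [hze, lie_lie, hak v hv, lie_zero, sub_zero, hak _ (h0m _ hwe v hv)]
  -- a kills V₀
  have ha0 : ∀ t ∈ V₀, ⁅a, t⁆ = 0 := by
    have hspan : ∀ t ∈ Submodule.span k {w : g | ∃ x ∈ Vm, ∃ y ∈ Vp, w = ⁅x, y⁆},
        ⁅a, t⁆ = 0 := by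
      intro t ht
      induction ht using Submodule.span_induction with
      | mem w hw =>
        obtain ⟨u, hu, p, hp, rfl⟩ := hw
        rw [leibniz_lie, hak u hu, hap p hp, zero_lie, lie_zero, add_zero]
      | zero => exact lie_zero a
      | add y z _ _ hy hz => rw [lie_add, hy, hz, add_zero]
      | smul c y _ hy => rw [lie_smul, hy, smul_zero]
    exact fun t ht => hspan t (hgen ht)
  -- a is central
  have hcen : a ∈ LieAlgebra.center k g := by
    rw [LieAlgebra.center, LieModule.mem_maxTrivSubmodule]
    intro y
    have hy : y ∈ Vm ⊔ V₀ ⊔ Vp := by rw [hsup]; trivial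
    obtain ⟨c, hc, p, hp, rfl⟩ := Submodule.mem_sup.mp hy
    obtain ⟨m, hm, t, ht, rfl⟩ := Submodule.mem_sup.mp hc
    have : ⁅a, m + t + p⁆ = 0 := by
      rw [lie_add, lie_add, hak m hm, ha0 t ht, hap p hp, add_zero, add_zero]
    rw [← lie_skew, this, neg_zero]
  refine ⟨hcen, fun hbot => ?_⟩
  rw [hbot] at hcen
  simpa using hcen
end
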